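/- arXiv:2509.13537 — 2 statements merged into one kernel-verified Lean document; each statement's English description precedes it below -/
import Mathlib

section
/- (Coppel's inequality) Let A : ℝ → ℝ^{n×n} be piecewise continuous and let x(t) solve ẋ = A(t)x with x(t₀) = x₀. Then for any norm |·| on ℝ^n with induced matrix measure μ, |x(t)| ≤ exp(∫_{t₀}^t μ(A(s)) ds) · |x₀| for all t ≥ t₀. -/
open Filter Topology

/-- A function `N` is a norm on a real vector space. -/
def IsNorm {E : Type*} [AddCommGroup E] [Module ℝ E] (N : E → ℝ) : Prop :=
  (∀ v, N v = 0 ↔ v = 0) ∧ (∀ (c : ℝ) (v : E), N (c • v) = |c| * N v) ∧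
    (∀ v w, N (v + w) ≤ N v + N w)

/-- Operator norm of a (possibly rectangular) matrix induced by norms on domain and codomain. -/
noncomputable def opNorm {n m : ℕ} (Nin : (Fin m → ℝ) → ℝ) (Nout : (Fin n → ℝ) → ℝ)
    (A : Matrix (Fin n) (Fin m) ℝ) : ℝ :=
  sSup {c | ∃ v, Nin v = 1 ∧ c = Nout (A.mulVec v)}

/-- `μ` is the matrix measure (logarithmic norm) induced by the norm `N` on `ℝ^n`. -/
def IsMatMeasure {n : ℕ} (N : (Fin n → ℝ) → ℝ) (μ : Matrix (Fin n) (Fin n) ℝ → ℝ) : Prop :=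
  ∀ A : Matrix (Fin n) (Fin n) ℝ,
    Tendsto (fun t : ℝ => (opNorm N N (1 + t • A) - 1) / t) (𝓝[>] 0) (𝓝 (μ A))


/-!
Along a solution, the right Dini derivative of `t ↦ N (x t)` is at most `μ (A t) * N (x t)`:
this is read off from `x (t + h) = (1 + h • A t) *ᵥ x t + o(h)` and the definition of `μ`.
If `μ ∘ A` were continuous, comparing with `N x₀ * exp (∫ μ ∘ A)` would finish the proof. As it is
only integrable, take instead a lower semicontinuous `g > μ ∘ A` with `∫ g < ∫ μ ∘ A + ε`
(Vitali–Carathéodory): the barrier `(N x₀ + ε) * exp (∫ g)` has right slopes eventually above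
`w` times its value for any `w < g`, so `N ∘ x` can never cross it. Then let `ε → 0`.
-/

open Set MeasureTheory
open scoped Matrix

namespace IsNorm

section Module

variable {E : Type*} [AddCommGroup E] [Module ℝ E] {N : E → ℝ} (hN : IsNorm N)
include hN

theorem map_zero : N 0 = 0 := (hN.1 0).2 rfl

theorem map_neg (v : E) : N (-v) = N v := by
  simpa using hN.2.1 (-1) v

theorem map_smul_of_nonneg {c : ℝ} (hc : 0 ≤ c) (v : E) : N (c • v) = c * N v := by
  rw [hN.2.1, abs_of_nonneg hc]

theorem le_add_sub (v w : E) : N v ≤ N w + N (v - w) := by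
  simpa using hN.2.2 w (v - w)

theorem nonneg (v : E) : 0 ≤ N v := by
  have h := hN.2.2 v (-v)
  rw [add_neg_cancel, hN.map_zero, hN.map_neg] at h
  linarith

theorem pos {v : E} (hv : v ≠ 0) : 0 < N v :=
  (hN.nonneg v).lt_of_ne fun h => hv ((hN.1 v).1 h.symm)

theorem abs_sub_le (v w : E) : |N v - N w| ≤ N (v - w) := by
  have := hN.le_add_sub w v
  rw [← neg_sub, hN.map_neg] at this
  exact abs_sub_le_iff.2 ⟨by linarith [hN.le_add_sub v w], by linarith⟩

end Module

section Pi

variable {n : ℕ} {N : (Fin n → ℝ) → ℝ} (hN : IsNorm N)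
include hN

theorem exists_le_mul_norm : ∃ C, 0 ≤ C ∧ ∀ u, N u ≤ C * ‖u‖ := by
  refine ⟨∑ i, N (Pi.single i 1), Finset.sum_nonneg fun i _ => hN.nonneg _, fun u => ?_⟩
  calc N u = N (∑ i, u i • Pi.single i 1) := by
        congr 1; ext j; simp [Finset.sum_apply, Pi.single_apply]
    _ ≤ ∑ i, N (u i • Pi.single i 1) :=
        Finset.le_sum_of_subadditive N hN.map_zero.le hN.2.2 _ _
    _ = ∑ i, |u i| * N (Pi.single i 1) := by simp_rw [hN.2.1]
    _ ≤ ∑ i, ‖u‖ * N (Pi.single i 1) := by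
        gcongr with i
        · exact hN.nonneg _
        · exact norm_le_pi_norm u i
    _ = (∑ i, N (Pi.single i 1)) * ‖u‖ := by rw [Finset.sum_mul]; simp_rw [mul_comm]

theorem continuous : Continuous N := by
  obtain ⟨C, -, hC⟩ := hN.exists_le_mul_norm
  refine (LipschitzWith.of_dist_le' (K := C) fun u v => ?_).continuous
  rw [Real.dist_eq, dist_eq_norm]
  exact (hN.abs_sub_le u v).trans (hC _)

theorem exists_pos_mul_norm_le : ∃ c, 0 < c ∧ ∀ u, c * ‖u‖ ≤ N u := by
  rcases isEmpty_or_nonempty (Fin n) with hn | hn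
  · exact ⟨1, one_pos, fun u => by simp [Subsingleton.elim u 0, hN.map_zero]⟩
  obtain ⟨v, hv, hmin⟩ := (isCompact_sphere (0 : Fin n → ℝ) 1).exists_isMinOn
    (NormedSpace.sphere_nonempty.2 zero_le_one) hN.continuous.continuousOn
  refine ⟨N v, hN.pos (ne_zero_of_mem_unit_sphere ⟨v, hv⟩), fun u => ?_⟩
  rcases eq_or_ne u 0 with rfl | hu
  · simp [hN.map_zero]
  have hu' : 0 < ‖u‖ := norm_pos_iff.2 hu
  have hsphere : ‖u‖⁻¹ • u ∈ Metric.sphere (0 : Fin n → ℝ) 1 := by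
    simp [norm_smul, hu'.ne']
  have : N v ≤ N (‖u‖⁻¹ • u) := hmin hsphere
  rw [hN.map_smul_of_nonneg (inv_nonneg.2 hu'.le), le_inv_mul_iff₀ hu'] at this
  linarith

theorem bddAbove_mulVec_unitSphere (M : Matrix (Fin n) (Fin n) ℝ) :
    BddAbove {c | ∃ v, N v = 1 ∧ c = N (M *ᵥ v)} := by
  obtain ⟨C, hC0, hC⟩ := hN.exists_le_mul_norm
  obtain ⟨c, hc0, hc⟩ := hN.exists_pos_mul_norm_le
  let _ := Matrix.linftyOpNormedAddCommGroup (m := Fin n) (n := Fin n) (α := ℝ)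
  refine ⟨C * (‖M‖ * c⁻¹), ?_⟩
  rintro _ ⟨v, hv, rfl⟩
  have hv' : ‖v‖ ≤ c⁻¹ := by
    rw [← mul_le_mul_iff_of_pos_left hc0, mul_inv_cancel₀ hc0.ne']
    linarith [hc v]
  calc N (M *ᵥ v) ≤ C * ‖M *ᵥ v‖ := hC _
    _ ≤ C * (‖M‖ * c⁻¹) := by
      gcongr
      exact (Matrix.linfty_opNorm_mulVec M v).trans (by gcongr)

theorem le_opNorm_mul (M : Matrix (Fin n) (Fin n) ℝ) (v : Fin n → ℝ) :
    N (M *ᵥ v) ≤ opNorm N N M * N v := by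
  rcases eq_or_ne v 0 with rfl | hv
  · simp [hN.map_zero]
  have hv0 := hN.pos hv
  have hunit : N ((N v)⁻¹ • v) = 1 := by
    rw [hN.map_smul_of_nonneg (inv_nonneg.2 hv0.le), inv_mul_cancel₀ hv0.ne']
  have hle : N (M *ᵥ ((N v)⁻¹ • v)) ≤ opNorm N N M :=
    le_csSup (hN.bddAbove_mulVec_unitSphere M) ⟨_, hunit, rfl⟩
  rw [Matrix.mulVec_smul, hN.map_smul_of_nonneg (inv_nonneg.2 hv0.le),
    inv_mul_le_iff₀ hv0] at hle
  linarith

end Pi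

end IsNorm

theorem IsMatMeasure.eventually_slope_lt {n : ℕ} {N : (Fin n → ℝ) → ℝ}
    {μ : Matrix (Fin n) (Fin n) ℝ → ℝ} (hμ : IsMatMeasure N μ) (hN : IsNorm N)
    {M : Matrix (Fin n) (Fin n) ℝ} {x : ℝ → Fin n → ℝ} {τ : ℝ}
    (hx : HasDerivAt x (M *ᵥ x τ) τ) {r : ℝ} (hr : μ M * N (x τ) < r) :
    ∀ᶠ z in 𝓝[>] τ, slope (N ∘ x) τ z < r := by
  set d := M *ᵥ x τ
  have hshift : Tendsto (fun z => z - τ) (𝓝[>] τ) (𝓝[>] 0) := by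
    refine tendsto_nhdsWithin_iff.2 ⟨?_, ?_⟩
    · simpa using ((continuous_sub_right τ).tendsto τ).mono_left nhdsWithin_le_nhds
    · filter_upwards [self_mem_nhdsWithin] with z hz using sub_pos.2 (mem_Ioi.1 hz)
  have hrem : Tendsto (fun z => N (slope x τ z - d)) (𝓝[>] τ) (𝓝 0) := by
    have hslope := (hasDerivAt_iff_tendsto_slope.1 hx).mono_left
      (nhdsWithin_mono τ fun z (hz : z ∈ Ioi τ) => (hz.ne' : z ∈ ({τ}ᶜ : Set ℝ)))
    have := (hN.continuous.tendsto _).comp (hslope.sub_const d)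
    rwa [sub_self, hN.map_zero] at this
  have hlim : Tendsto (fun z => (opNorm N N (1 + (z - τ) • M) - 1) / (z - τ) * N (x τ)
      + N (slope x τ z - d)) (𝓝[>] τ) (𝓝 (μ M * N (x τ))) := by
    simpa using (((hμ M).comp hshift).mul_const (N (x τ))).add hrem
  filter_upwards [hlim.eventually_lt_const hr, self_mem_nhdsWithin] with z hlt hz
  have hh : 0 < z - τ := sub_pos.2 hz
  have hxz : x z = (1 + (z - τ) • M) *ᵥ x τ + (z - τ) • (slope x τ z - d) := by
    rw [smul_sub, sub_smul_slope, vsub_eq_sub, Matrix.add_mulVec, Matrix.one_mulVec,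
      Matrix.smul_mulVec]
    abel
  have hNxz : N (x z) ≤
      opNorm N N (1 + (z - τ) • M) * N (x τ) + (z - τ) * N (slope x τ z - d) := by
    rw [hxz]
    exact (hN.2.2 _ _).trans
      (add_le_add (hN.le_opNorm_mul _ _) (hN.map_smul_of_nonneg hh.le _).le)
  refine lt_of_le_of_lt ?_ hlt
  calc slope (N ∘ x) τ z = (N (x z) - N (x τ)) / (z - τ) := slope_def_field _ _ _
    _ ≤ ((opNorm N N (1 + (z - τ) • M) - 1) * N (x τ) + (z - τ) * N (slope x τ z - d))
        / (z - τ) := by gcongr; linarith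
    _ = _ := by field_simp

theorem le_on_Icc_of_frequently_le_of_eq {f B : ℝ → ℝ} {a b : ℝ}
    (hf : ContinuousOn f (Icc a b)) (hB : ContinuousOn B (Icc a b)) (ha : f a ≤ B a)
    (hcontact : ∀ τ ∈ Ico a b, f τ = B τ → ∃ᶠ z in 𝓝[>] τ, f z ≤ B z) :
    ∀ x ∈ Icc a b, f x ≤ B x := by
  have hclosed : IsClosed ({x | f x ≤ B x} ∩ Icc a b) := by
    rw [inter_comm]; exact isClosed_Icc.isClosed_le hf hB
  refine fun x hx => hclosed.Icc_subset_of_forall_exists_gt ha (fun τ ⟨hτB, hτ⟩ y hy => ?_) hx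
  have hIoc : Ioc τ y ∈ 𝓝[>] τ := Ioc_mem_nhdsGT hy
  rcases (show f τ ≤ B τ from hτB).lt_or_eq with hlt | heq
  · have hτ' := Ico_subset_Icc_self hτ
    have hnear : ∀ᶠ z in 𝓝[>] τ, f z < B z :=
      nhdsWithin_le_of_mem (Icc_mem_nhdsGT_of_mem hτ) ((hf τ hτ').eventually_lt (hB τ hτ') hlt)
    exact (hnear.and hIoc).exists.imp fun z hz => ⟨hz.1.le, hz.2⟩
  · exact ((hcontact τ hτ heq).and_eventually hIoc).exists

theorem LowerSemicontinuous.eventually_mul_sub_le_integral_sub {g : ℝ → EReal}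
    (hg : LowerSemicontinuous g) {a b : ℝ} (hfin : ∀ᵐ s, s ∈ Ioc a b → g s ≠ ⊤)
    (hint : IntervalIntegrable (fun s => (g s).toReal) volume a b) {τ w : ℝ} (hτ : τ ∈ Ico a b)
    (hw : (w : EReal) < g τ) :
    ∀ᶠ z in 𝓝[>] τ, w * (z - τ) ≤
      (∫ s in a..z, (g s).toReal) - ∫ s in a..τ, (g s).toReal := by
  obtain ⟨l, u, ⟨hlτ, hτu⟩, hsub⟩ := mem_nhds_iff_exists_Ioo_subset.1 (hg τ w hw)
  filter_upwards [Ioo_mem_nhdsGT (lt_min hτu hτ.2)] with z hz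
  have hzu : z < u := hz.2.trans_le (min_le_left _ _)
  have hzb : z ≤ b := (hz.2.trans_le (min_le_right _ _)).le
  have hsubint : ∀ c ∈ Icc a b, IntervalIntegrable (fun s => (g s).toReal) volume a c :=
    fun c hc => hint.mono_set <| by
      rw [uIcc_of_le hc.1, uIcc_of_le (hc.1.trans hc.2)]; exact Icc_subset_Icc_right hc.2
  have hτint := hsubint τ (Ico_subset_Icc_self hτ)
  have hzint := hsubint z ⟨hτ.1.trans hz.1.le, hzb⟩
  rw [intervalIntegral.integral_interval_sub_left hzint hτint]
  have hle : ∀ᵐ s, s ∈ Ioc τ z → w ≤ (g s).toReal := by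
    filter_upwards [hfin] with s hs hsτz
    have hws : (w : EReal) < g s := hsub ⟨hlτ.trans hsτz.1, hsτz.2.trans_lt hzu⟩
    have := hs ⟨hτ.1.trans_lt hsτz.1, hsτz.2.trans hzb⟩
    simpa using EReal.toReal_le_toReal hws.le (EReal.coe_ne_bot w) this
  calc w * (z - τ) = ∫ _ in τ..z, w := by simp [mul_comm]
    _ ≤ ∫ s in τ..z, (g s).toReal := by
      rw [intervalIntegral.integral_of_le hz.1.le, intervalIntegral.integral_of_le hz.1.le]
      exact setIntegral_mono_ae_restrict (integrableOn_const measure_Ioc_lt_top.ne)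
        (hτint.symm.trans hzint).1 ((ae_restrict_iff' measurableSet_Ioc).2 hle)

theorem le_mul_exp_integral_of_lt_lowerSemicontinuous {f m : ℝ → ℝ} {g : ℝ → EReal} {a b : ℝ}
    (hab : a ≤ b) (hf : ContinuousOn f (Icc a b))
    (hslope : ∀ τ ∈ Ico a b, ∀ r, m τ * f τ < r → ∃ᶠ z in 𝓝[>] τ, slope f τ z < r)
    (hg : LowerSemicontinuous g) (hmg : ∀ s, (m s : EReal) < g s)
    (hfin : ∀ᵐ s, s ∈ Ioc a b → g s ≠ ⊤)
    (hint : IntervalIntegrable (fun s => (g s).toReal) volume a b) {c : ℝ} (hc : 0 < c)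
    (hfa : f a ≤ c) : f b ≤ c * Real.exp (∫ s in a..b, (g s).toReal) := by
  set G : ℝ → ℝ := fun z => ∫ s in a..z, (g s).toReal
  have hG : ContinuousOn G (Icc a b) := by
    simpa [uIcc_of_le hab] using
      intervalIntegral.continuousOn_primitive_interval' hint left_mem_uIcc
  refine le_on_Icc_of_frequently_le_of_eq (B := fun z => c * Real.exp (G z)) hf
    (continuousOn_const.mul (Real.continuous_exp.comp_continuousOn hG))
    (by simpa [G] using hfa) (fun τ hτ hcontact => ?_) b (right_mem_Icc.2 hab)
  obtain ⟨w, hmw, hwg⟩ := EReal.lt_iff_exists_real_btwn.1 (hmg τ)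
  set Bτ := c * Real.exp (G τ)
  have hBτ : 0 < Bτ := by positivity
  have hr : m τ * f τ < w * Bτ := by
    rw [hcontact]; exact mul_lt_mul_of_pos_right (by exact_mod_cast hmw) hBτ
  refine ((hslope τ hτ _ hr).and_eventually
    ((hg.eventually_mul_sub_le_integral_sub hfin hint hτ hwg).and self_mem_nhdsWithin)).mono
    fun z ⟨hfz, hGz, hz⟩ => ?_
  have hh : 0 < z - τ := sub_pos.2 hz
  rw [slope_def_field, div_lt_iff₀ hh] at hfz
  calc f z ≤ Bτ * (w * (z - τ) + 1) := by linarith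
    _ ≤ Bτ * Real.exp (G z - G τ) := by
      gcongr; exact (Real.add_one_le_exp _).trans (Real.exp_le_exp.2 hGz)
    _ = c * Real.exp (G z) := by simp only [Bτ, Real.exp_sub]; field_simp

theorem le_exp_integral_mul_of_frequently_slope_lt {f m : ℝ → ℝ} {a b : ℝ} (hab : a ≤ b)
    (hf : ContinuousOn f (Icc a b)) (hfa : 0 ≤ f a) (hm : IntervalIntegrable m volume a b)
    (hslope : ∀ τ ∈ Ico a b, ∀ r, m τ * f τ < r → ∃ᶠ z in 𝓝[>] τ, slope f τ z < r) :
    f b ≤ Real.exp (∫ s in a..b, m s) * f a := by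
  set I := ∫ s in a..b, m s
  have hε : ∀ ε > 0, f b ≤ (f a + ε) * Real.exp (I + ε) := by
    intro ε hε
    obtain ⟨g, hmg, hg, hgint, hfin, hgI⟩ := exists_lt_lowerSemicontinuous_integral_lt m
      ((intervalIntegrable_iff_integrableOn_Ioc_of_le hab).1 hm) hε
    rw [← intervalIntegral.integral_of_le hab, ← intervalIntegral.integral_of_le hab] at hgI
    calc f b ≤ (f a + ε) * Real.exp (∫ s in a..b, (g s).toReal) :=
          le_mul_exp_integral_of_lt_lowerSemicontinuous hab hf hslope hg hmg
            ((ae_restrict_iff' measurableSet_Ioc).1 (hfin.mono fun _ => ne_of_lt))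
            ((intervalIntegrable_iff_integrableOn_Ioc_of_le hab).2 hgint)
            (by linarith) (by linarith)
      _ ≤ (f a + ε) * Real.exp (I + ε) := by gcongr
  have hlim : Tendsto (fun ε => (f a + ε) * Real.exp (I + ε)) (𝓝[>] 0)
      (𝓝 (f a * Real.exp I)) := by
    have : Continuous fun ε => (f a + ε) * Real.exp (I + ε) := by fun_prop
    simpa using (this.tendsto 0).mono_left nhdsWithin_le_nhds
  rw [mul_comm]
  exact ge_of_tendsto hlim (eventually_nhdsWithin_of_forall hε)

open MeasureTheory in
/-- Coppel's inequality: `|x(t)| ≤ exp(∫ μ(A(s)) ds) |x₀|` for solutions of `ẋ = A(t)x`. -/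
theorem coppel_inequality {n : ℕ}
    (N : (Fin n → ℝ) → ℝ) (hN : IsNorm N)
    (μ : Matrix (Fin n) (Fin n) ℝ → ℝ) (hμ : IsMatMeasure N μ)
    (A : ℝ → Matrix (Fin n) (Fin n) ℝ) (x : ℝ → Fin n → ℝ) (t₀ : ℝ) (x₀ : Fin n → ℝ)
    (hinit : x t₀ = x₀)
    (hderiv : ∀ t : ℝ, HasDerivAt x ((A t).mulVec (x t)) t)
    (hint : ∀ t : ℝ, IntervalIntegrable (fun s => μ (A s)) volume t₀ t)
    (t : ℝ) (ht : t₀ ≤ t) :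
    N (x t) ≤ Real.exp (∫ s in t₀..t, μ (A s)) * N x₀ := by
  have hx : Continuous x := continuous_iff_continuousAt.2 fun s => (hderiv s).continuousAt
  subst hinit
  exact le_exp_integral_mul_of_frequently_slope_lt (f := N ∘ x) ht
    (hN.continuous.comp hx).continuousOn (hN.nonneg _) (hint t)
    fun τ _ _ hr => (hμ.eventually_slope_lt hN (hderiv τ) hr).frequently
end

section
/- (Comparison lemma for Metzler matrices) Let M ∈ ℝ^{m×m} be Metzler and let y : [t₀, t₁] → ℝ^m be a continuous function with y(t) ≥ 0 whose right-sided derivative satisfies D⁺y(t) ≤ M y(t) entrywise for all t ∈ [t₀, t₁). Then y(t) ≤ e^{M(t−t₀)} y(t₀) entrywise for all t ∈ [t₀, t₁]. -/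
open Filter Topology

/-- The matrix exponential `e^A = Σ A^k / k!`. -/
noncomputable def mexp {n : ℕ} (A : Matrix (Fin n) (Fin n) ℝ) : Matrix (Fin n) (Fin n) ℝ :=
  ∑' k : ℕ, ((k.factorial : ℝ)⁻¹) • A ^ k

/-- A real square matrix is Metzler if its off-diagonal entries are nonnegative. -/
def IsMetzler {n : ℕ} (A : Matrix (Fin n) (Fin n) ℝ) : Prop :=
  ∀ i j, i ≠ j → 0 ≤ A i j

/-!
Set `z(s) = e^{(t-s)M} y(s)`. By the product rule its right derivative is
`e^{(t-s)M} (D⁺y(s) - M y(s))`, which is `≤ 0` as soon as `e^{(t-s)M}` is entrywise nonnegative;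
hence `y(t) = z(t) ≤ z(t₀) = e^{(t-t₀)M} y(t₀)`. For a Metzler `M`, some shift `M + cI` is
entrywise nonnegative, so `e^{τ(M + cI)}` is a series of nonnegative matrices for `τ ≥ 0`,
and `e^{τM} = e^{-τc} e^{τ(M + cI)}` is nonnegative too.
-/

open NormedSpace Set Matrix

theorem le_of_hasDerivWithinAt_Ici_nonpos {f : ℝ → ℝ} {a b : ℝ} (hab : a ≤ b)
    (hf : ContinuousOn f (Icc a b))
    (hf' : ∀ x ∈ Ico a b, ∃ d ≤ 0, HasDerivWithinAt f d (Ici x) x) : f b ≤ f a := by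
  choose! f' hf'_nonpos hf'_deriv using hf'
  exact image_le_of_deriv_right_le_deriv_boundary (B := fun _ => f a) (B' := fun _ => 0) hf
    hf'_deriv le_rfl continuousOn_const (fun x _ => hasDerivWithinAt_const x _ (f a))
    hf'_nonpos ⟨hab, le_rfl⟩

namespace Matrix

variable {ι : Type*} [Fintype ι]

theorem mulVec_apply_le_mulVec_apply {A : Matrix ι ι ℝ} (hA : ∀ i j, 0 ≤ A i j)
    {v w : ι → ℝ} (hvw : ∀ j, v j ≤ w j) (i : ι) : (A *ᵥ v) i ≤ (A *ᵥ w) i :=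
  Finset.sum_le_sum fun j _ => mul_le_mul_of_nonneg_left (hvw j) (hA i j)

theorem hasDerivWithinAt_mulVec_apply {Φ : ℝ → Matrix ι ι ℝ} {Φ' : Matrix ι ι ℝ}
    {y : ℝ → ι → ℝ} {y' : ι → ℝ} {s : Set ℝ} {x : ℝ}
    (hΦ : HasDerivWithinAt Φ Φ' s x) (hy : HasDerivWithinAt y y' s x) (i : ι) :
    HasDerivWithinAt (fun x => (Φ x *ᵥ y x) i) ((Φ' *ᵥ y x) i + (Φ x *ᵥ y') i) s x := by
  simp only [mulVec, dotProduct, ← Finset.sum_add_distrib]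
  refine HasDerivWithinAt.fun_sum fun j _ => ?_
  have hΦij : HasDerivWithinAt (fun x => Φ x i j) (Φ' i j) s x :=
    hasDerivWithinAt_pi.1 ((hasDerivWithinAt_pi (φ := Φ)).1 hΦ i) j
  exact hΦij.mul (hasDerivWithinAt_pi.1 hy j)

variable [DecidableEq ι]

theorem hasSum_exp (A : Matrix ι ι ℝ) :
    HasSum (fun k : ℕ => (k.factorial⁻¹ : ℝ) • A ^ k) (exp A) :=
  -- every matrix norm induces the product topology used in the statements; the operator norm
  -- makes the matrices a Banach algebra, which the `NormedSpace.exp` API needs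
  open scoped Matrix.Norms.Operator in exp_series_hasSum_exp' A

theorem hasDerivAt_exp_sub_smul (A : Matrix ι ι ℝ) (t s : ℝ) :
    HasDerivAt (fun s : ℝ => exp ((t - s) • A)) (-(exp ((t - s) • A) * A)) s := by
  open scoped Matrix.Norms.Operator in
  have h := (hasDerivAt_exp_smul_const A (t - s)).scomp s ((hasDerivAt_id s).const_sub t)
  rw [neg_one_smul] at h
  exact h

theorem exp_smul_one (c : ℝ) : exp (c • (1 : Matrix ι ι ℝ)) = Real.exp c • 1 := by
  rw [smul_one_eq_diagonal, exp_diagonal, smul_one_eq_diagonal, Real.exp_eq_exp_ℝ]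
  congr 1
  funext i
  exact map_exp (Pi.evalRingHom (fun _ : ι => ℝ) i) (continuous_apply i) (fun _ => c)

theorem exp_nonneg_of_nonneg {A : Matrix ι ι ℝ} (hA : ∀ i j, 0 ≤ A i j) (i j : ι) :
    0 ≤ exp A i j := by
  have hsum : HasSum (fun k : ℕ => (k.factorial⁻¹ : ℝ) * (A ^ k) i j) (exp A i j) :=
    Pi.hasSum.1 (Pi.hasSum.1 (hasSum_exp A) i) j
  exact hsum.nonneg fun k => mul_nonneg (by positivity) (pow_apply_nonneg hA k i j)

end Matrix

theorem mexp_eq_exp {n : ℕ} (A : Matrix (Fin n) (Fin n) ℝ) : mexp A = exp A := by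
  rw [exp_eq_tsum ℝ]
  rfl

namespace IsMetzler

variable {n : ℕ} {M : Matrix (Fin n) (Fin n) ℝ}

theorem exists_nonneg_add_smul_one (hM : IsMetzler M) :
    ∃ c : ℝ, ∀ i j, 0 ≤ (M + c • 1) i j := by
  refine ⟨∑ k, |M k k|, fun i j => ?_⟩
  rcases eq_or_ne i j with rfl | hij
  · have hdiag := Finset.single_le_sum (fun k _ => abs_nonneg (M k k)) (Finset.mem_univ i)
    simp only [Matrix.add_apply, Matrix.smul_apply, one_apply_eq, smul_eq_mul, mul_one]
    linarith [neg_abs_le (M i i), hdiag]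
  · simpa [one_apply_ne hij] using hM i j hij

theorem exp_smul_nonneg (hM : IsMetzler M) {s : ℝ} (hs : 0 ≤ s) (i j : Fin n) :
    0 ≤ exp (s • M) i j := by
  obtain ⟨c, hc⟩ := hM.exists_nonneg_add_smul_one
  have hshift : exp (s • (M + c • 1)) = Real.exp (s * c) • exp (s • M) := by
    rw [smul_add, smul_smul, exp_add_of_commute _ _ ((Commute.one_right _).smul_right _),
      exp_smul_one, mul_smul_comm, mul_one]
  have hnonneg :=
    exp_nonneg_of_nonneg (A := s • (M + c • 1)) (fun i j => smul_nonneg hs (hc i j)) i j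
  rw [hshift, Matrix.smul_apply, smul_eq_mul] at hnonneg
  exact nonneg_of_mul_nonneg_right hnonneg (Real.exp_pos _)

end IsMetzler

theorem metzler_comparison_lemma_general {m : ℕ}
    (M : Matrix (Fin m) (Fin m) ℝ) (hM : IsMetzler M)
    (t₀ t₁ : ℝ) (y : ℝ → Fin m → ℝ)
    (hcont : ContinuousOn y (Set.Icc t₀ t₁))
    (hder : ∀ t ∈ Set.Ico t₀ t₁, ∃ d : Fin m → ℝ,
      HasDerivWithinAt y d (Set.Ici t) t ∧ ∀ i, d i ≤ M.mulVec (y t) i)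
    (t : ℝ) (ht : t ∈ Set.Icc t₀ t₁) (i : Fin m) :
    y t i ≤ (mexp ((t - t₀) • M)).mulVec (y t₀) i := by
  obtain ⟨ht₀, ht₁⟩ := ht
  set Φ : ℝ → Matrix (Fin m) (Fin m) ℝ := fun s => exp ((t - s) • M)
  have hΦ (s : ℝ) : HasDerivAt Φ (-(Φ s * M)) s := hasDerivAt_exp_sub_smul M t s
  open scoped Matrix.Norms.Operator in
  have hz_cont : ContinuousOn (fun s => (Φ s *ᵥ y s) i) (Icc t₀ t) :=
    ((continuous_apply i).comp (continuous_fst.matrix_mulVec continuous_snd)).comp_continuousOn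
      ((continuous_iff_continuousAt.2 fun s => (hΦ s).continuousAt).continuousOn.prodMk
        (hcont.mono (Icc_subset_Icc_right ht₁)))
  have hz_deriv : ∀ s ∈ Ico t₀ t,
      ∃ d ≤ 0, HasDerivWithinAt (fun s => (Φ s *ᵥ y s) i) d (Ici s) s := by
    intro s hs
    obtain ⟨d, hd, hdM⟩ := hder s ⟨hs.1, hs.2.trans_le ht₁⟩
    refine ⟨_, ?_, hasDerivWithinAt_mulVec_apply (hΦ s).hasDerivWithinAt hd i⟩
    rw [neg_mulVec, ← mulVec_mulVec, Pi.neg_apply, neg_add_nonpos_iff]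
    exact mulVec_apply_le_mulVec_apply (hM.exp_smul_nonneg (sub_nonneg.2 hs.2.le)) hdM i
  simpa [Φ, mexp_eq_exp] using le_of_hasDerivWithinAt_Ici_nonpos ht₀ hz_cont hz_deriv

/-- Comparison lemma for Metzler matrices: if `D⁺y(t) ≤ M y(t)` entrywise and `y ≥ 0`,
then `y(t) ≤ e^{M(t−t₀)} y(t₀)` entrywise. -/
theorem metzler_comparison_lemma {m : ℕ}
    (M : Matrix (Fin m) (Fin m) ℝ) (hM : IsMetzler M)
    (t₀ t₁ : ℝ) (h01 : t₀ ≤ t₁) (y : ℝ → Fin m → ℝ)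
    (hcont : ContinuousOn y (Set.Icc t₀ t₁))
    (hpos : ∀ t ∈ Set.Icc t₀ t₁, ∀ i, 0 ≤ y t i)
    (hder : ∀ t ∈ Set.Ico t₀ t₁, ∃ d : Fin m → ℝ,
      HasDerivWithinAt y d (Set.Ici t) t ∧ ∀ i, d i ≤ M.mulVec (y t) i)
    (t : ℝ) (ht : t ∈ Set.Icc t₀ t₁) (i : Fin m) :
    y t i ≤ (mexp ((t - t₀) • M)).mulVec (y t₀) i :=
  metzler_comparison_lemma_general M hM t₀ t₁ y hcont hder t ht i
end
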